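/- Let ε > 0 and κ > 0 satisfy 2εd + κd < δ. Let G, H be finite graphs with degree bound d and |V(G)| = |V(H)| = n. Suppose there exist spanning subgraphs G' ⊆ G and H' ⊆ H all of whose components have size at most K such that |E(G)∖E(G')| ≤ ε d n, |E(H)∖E(H')| ≤ ε d n, and Σ_S |c^{G'}_S − c^{H'}_S| < κ. Then there exists a bijection ρ : V(G) → V(H) with |ρ^{-1}(E(H)) △ E(G)| ≤ δ n. -/

import Mathlib

/-!
Both `G'` and `H'` embed, as induced subgraphs, into one fixed graph: the disjoint union of
countably many copies of a representative of every isomorphism class `S`, each graph filling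
its components of class `S` into the first few copies of `S`. A vertex is matched when its
image is hit by the other graph as well, and a bijection `ρ` sending every matched vertex to
the vertex with the same image turns `G'` into `ρ⁻¹(H')` on the matched vertices. Hence an edge
of `ρ⁻¹(E(H)) △ E(G)` lies in `E(G) ∖ E(G')` or `ρ⁻¹(E(H) ∖ E(H'))`, or is an edge of `G'` or
of `ρ⁻¹(H')` at an unmatched vertex. With `a_S`, `b_S` components of class `S` in `G'`, `H'`,
the unmatched vertices of the two sides number `∑_S |a_S - b_S| |S| = n ∑_S |c^{G'}_S - c^{H'}_S|`
together, fewer than `κ n`, and each carries at most `d` edges of either graph.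
-/

/-- A representative of an isomorphism class of connected graphs with at most `K`
vertices. -/
structure ConnRep (K : ℕ) where
  n : ℕ
  hn : n ≤ K
  graph : SimpleGraph (Fin n)
  conn : graph.Connected

/-- The component of `v` in `G` (as an induced subgraph) is isomorphic to the
representative `p`. -/
def compClass {V : Type*} {K : ℕ} (G : SimpleGraph V) (v : V) (p : ConnRep K) : Prop :=
  Nonempty (G.induce {w | G.Reachable v w} ≃g p.graph)

open Set SimpleGraph
open scoped symmDiff

section

variable {α ι : Type*}

lemma Set.ncard_symmDiff_of_subset_or_subset {s t : Set α} (hs : s.Finite) (ht : t.Finite)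
    (h : s ⊆ t ∨ t ⊆ s) : ((s ∆ t).ncard : ℝ) = |(s.ncard : ℝ) - t.ncard| := by
  rcases h with h | h
  · rw [symmDiff_of_le h, ncard_sdiff h hs, Nat.cast_sub (ncard_le_ncard h ht), abs_sub_comm,
      abs_of_nonneg (sub_nonneg.2 (by exact_mod_cast ncard_le_ncard h ht))]
  · rw [symmDiff_of_ge h, ncard_sdiff h ht, Nat.cast_sub (ncard_le_ncard h hs),
      abs_of_nonneg (sub_nonneg.2 (by exact_mod_cast ncard_le_ncard h hs))]

lemma Set.ncard_eq_sum_ncard_inter_preimage [Fintype ι] (π : α → ι) {s : Set α} (hs : s.Finite) :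
    s.ncard = ∑ i, (s ∩ π ⁻¹' {i}).ncard := by
  classical
  rw [ncard_eq_toFinset_card s hs,
    Finset.card_eq_sum_card_fiberwise (f := π) (t := Finset.univ) (fun _ _ => Finset.mem_univ _)]
  refine Finset.sum_congr rfl fun i _ => ?_
  rw [← ncard_coe_finset]
  congr 1
  ext
  simp

lemma Set.ncard_symmDiff_eq_sum_abs [Fintype ι] (π : α → ι) {s t : Set α} (hs : s.Finite)
    (ht : t.Finite) (h : ∀ i, s ∩ π ⁻¹' {i} ⊆ t ∩ π ⁻¹' {i} ∨ t ∩ π ⁻¹' {i} ⊆ s ∩ π ⁻¹' {i}) :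
    ((s ∆ t).ncard : ℝ) =
      ∑ i, |((s ∩ π ⁻¹' {i}).ncard : ℝ) - (t ∩ π ⁻¹' {i}).ncard| := by
  rw [ncard_eq_sum_ncard_inter_preimage π (hs.union ht |>.subset symmDiff_subset_union)]
  push_cast
  refine Finset.sum_congr rfl fun i _ => ?_
  rw [inter_symmDiff_distrib_right]
  exact ncard_symmDiff_of_subset_or_subset (hs.inter_of_left _) (ht.inter_of_left _) (h i)

lemma two_mul_ncard_compl_preimage_range {V W : Type*} [Finite V] [Finite W]
    (hcard : Nat.card V = Nat.card W) {f : V → α} {g : W → α} (hf : f.Injective)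
    (hg : g.Injective) : 2 * (f ⁻¹' range g)ᶜ.ncard = (range f ∆ range g).ncard := by
  have hfg : (f ⁻¹' range g)ᶜ.ncard = (range f \ range g).ncard := by
    rw [← image_compl_preimage, ncard_image_of_injective _ hf]
  have hgf : (range f \ range g).ncard = (range g \ range f).ncard := by
    have h1 := ncard_inter_add_ncard_sdiff_eq_ncard (range f) (range g) (finite_range f)
    have h2 := ncard_inter_add_ncard_sdiff_eq_ncard (range g) (range f) (finite_range g)
    rw [ncard_range_of_injective hf] at h1
    rw [ncard_range_of_injective hg, inter_comm] at h2
    omega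
  rw [Set.symmDiff_def, ncard_union_eq disjoint_sdiff_sdiff (finite_range f |>.sdiff)
    (finite_range g |>.sdiff), ← hgf, hfg, two_mul]

lemma sum_abs_sub_ncard_le [Fintype ι] {V W : Type*} [Fintype V] [Fintype W] {n : ℕ} {κ : ℝ}
    (hV : Fintype.card V = n) (hW : Fintype.card W = n) (s : ι → Set V) (t : ι → Set W)
    (h : ∑ i, |((s i).ncard : ℝ) / n - ((t i).ncard : ℝ) / n| < κ) :
    ∑ i, |((s i).ncard : ℝ) - (t i).ncard| ≤ κ * n := by
  rcases Nat.eq_zero_or_pos n with rfl | hn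
  · have : IsEmpty V := Fintype.card_eq_zero_iff.1 hV
    have : IsEmpty W := Fintype.card_eq_zero_iff.1 hW
    simp [eq_empty_of_isEmpty]
  have hn : (0 : ℝ) < n := by exact_mod_cast hn
  calc ∑ i, |((s i).ncard : ℝ) - (t i).ncard|
      = n * ∑ i, |((s i).ncard : ℝ) / n - ((t i).ncard : ℝ) / n| := by
        rw [Finset.mul_sum]
        refine Finset.sum_congr rfl fun i _ => ?_
        rw [← sub_div, abs_div, abs_of_pos hn, mul_div_cancel₀ _ hn.ne']
    _ ≤ κ * n := by rw [mul_comm]; exact mul_le_mul_of_nonneg_right h.le hn.le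

lemma exists_equiv_apply_eq_of_mem_preimage_range {V W : Type*} [Fintype V] [Fintype W]
    (hcard : Fintype.card V = Fintype.card W) {f : V → α} (hf : f.Injective) (g : W → α) :
    ∃ ρ : V ≃ W, ∀ v ∈ f ⁻¹' range g, g (ρ v) = f v := by
  cases isEmpty_or_nonempty W
  · exact ⟨Fintype.equivOfCardEq hcard, fun _ ⟨w, _⟩ => isEmptyElim w⟩
  have hinj : InjOn (Function.invFun g ∘ f) (f ⁻¹' range g) := fun u hu v hv huv =>
    hf (by rw [← Function.invFun_eq hu, ← Function.invFun_eq hv]; exact congrArg g huv)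
  obtain ⟨ρ, hρ⟩ := MapsTo.exists_equiv_extend_of_card_eq (t := Finset.univ)
    (by rw [hcard, Finset.card_univ]) (fun _ _ => Finset.mem_univ _) hinj
  refine ⟨ρ.trans (Equiv.subtypeUnivEquiv Finset.mem_univ), fun v hv => ?_⟩
  simp [hρ v hv, Function.invFun_eq hv]

lemma exists_injective_prod_index {β : Type*} [Finite α] (κ : α → β) :
    ∃ idx : α → ℕ, (fun a => (κ a, idx a)).Injective ∧
      range (fun a => (κ a, idx a)) = {x | x.2 < Nat.card {a // κ a = x.1}} := by
  let e b := Finite.equivFin {a // κ a = b}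
  have spec : ∀ a b (h : κ a = b), (e (κ a) ⟨a, rfl⟩ : ℕ) = e b ⟨a, h⟩ := by
    rintro a _ rfl
    rfl
  refine ⟨fun a => e (κ a) ⟨a, rfl⟩, fun a a' h => ?_, ?_⟩
  · obtain ⟨h1, h2⟩ := Prod.ext_iff.1 h
    dsimp only at h1 h2
    rw [spec a' (κ a) h1.symm] at h2
    exact congrArg Subtype.val ((e _).injective (Fin.ext h2))
  · ext ⟨b, i⟩
    constructor
    · rintro ⟨a, h⟩
      cases h
      exact Fin.is_lt _
    · intro hi
      refine ⟨((e b).symm ⟨i, hi⟩).1, Prod.ext ((e b).symm ⟨i, hi⟩).2 ?_⟩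
      dsimp only
      rw [spec _ b ((e b).symm ⟨i, hi⟩).2]
      simp

end

namespace SimpleGraph

variable {V W ι : Type*}

lemma edgeSet_comap (f : V → W) (G : SimpleGraph W) :
    (G.comap f).edgeSet = Sym2.map f ⁻¹' G.edgeSet := by
  ext e
  induction e using Sym2.ind
  simp

lemma ncard_preimage_sym2Map_equiv (ρ : V ≃ W) (s : Set (Sym2 W)) :
    (Sym2.map ρ ⁻¹' s).ncard = s.ncard :=
  ncard_preimage_of_injective_subset_range (Sym2.map.injective ρ.injective)
    fun e _ => ⟨e.map ρ.symm, by simp [Sym2.map_map]⟩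

lemma ncard_edgeSet_comap_sdiff (ρ : V ≃ W) (H H' : SimpleGraph W) :
    ((H.comap ρ).edgeSet \ (H'.comap ρ).edgeSet).ncard = (H.edgeSet \ H'.edgeSet).ncard := by
  rw [edgeSet_comap, edgeSet_comap, ← preimage_sdiff, ncard_preimage_sym2Map_equiv]

lemma ncard_neighborSet_comap_equiv (ρ : V ≃ W) (G : SimpleGraph W) (v : V) :
    ((G.comap ρ).neighborSet v).ncard = (G.neighborSet (ρ v)).ncard :=
  ncard_preimage_of_injective_subset_range ρ.injective fun w _ => ρ.surjective w

lemma ncard_neighborSet_le_of_le {G G' : SimpleGraph V} [Finite V] (h : G' ≤ G) (v : V) :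
    (G'.neighborSet v).ncard ≤ (G.neighborSet v).ncard :=
  ncard_le_ncard fun _ hw => h hw

lemma ncard_biUnion_incidenceSet_le [Finite V] (G : SimpleGraph V) {d : ℕ}
    (hd : ∀ v, (G.neighborSet v).ncard ≤ d) (s : Set V) :
    (⋃ v ∈ s, G.incidenceSet v).ncard ≤ d * s.ncard := by
  classical
  have := Fintype.ofFinite V
  calc (⋃ v ∈ s, G.incidenceSet v).ncard
      = (⋃ v ∈ s.toFinset, G.incidenceSet v).ncard := by simp
    _ ≤ ∑ v ∈ s.toFinset, (G.incidenceSet v).ncard := Finset.set_ncard_biUnion_le _ _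
    _ ≤ ∑ _v ∈ s.toFinset, d := Finset.sum_le_sum fun v _ => by
        rw [← Nat.card_coe_set_eq, Nat.card_congr (G.incidenceSetEquivNeighborSet v),
          Nat.card_coe_set_eq]
        exact hd v
    _ = d * s.ncard := by rw [Finset.sum_const, smul_eq_mul, ncard_eq_toFinset_card', mul_comm]

lemma edgeSet_symmDiff_subset_of_adj_iff {G H : SimpleGraph V} {s : Set V}
    (h : ∀ u ∈ s, ∀ v ∈ s, G.Adj u v ↔ H.Adj u v) :
    G.edgeSet ∆ H.edgeSet ⊆ (⋃ v ∈ sᶜ, G.incidenceSet v) ∪ ⋃ v ∈ sᶜ, H.incidenceSet v := by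
  intro e he
  induction e using Sym2.ind with | _ u v => ?_
  have hsome : u ∉ s ∨ v ∉ s := by
    by_contra! huv
    simp [Set.mem_symmDiff, h u huv.1 v huv.2] at he
  simp only [mem_union, mem_iUnion, mem_compl_iff, exists_prop]
  rcases Set.mem_symmDiff.1 he with ⟨he, -⟩ | ⟨he, -⟩ <;> rcases hsome with hu | hv
  all_goals first
    | exact Or.inl ⟨_, ‹_›, he, by simp⟩
    | exact Or.inr ⟨_, ‹_›, he, by simp⟩

lemma ncard_edgeSet_symmDiff_le [Finite V] {G G' H H' : SimpleGraph V} {d : ℕ} (hG' : G' ≤ G)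
    (hH' : H' ≤ H) (hdG' : ∀ v, (G'.neighborSet v).ncard ≤ d)
    (hdH' : ∀ v, (H'.neighborSet v).ncard ≤ d) {s : Set V}
    (hs : ∀ u ∈ s, ∀ v ∈ s, G'.Adj u v ↔ H'.Adj u v) :
    (G.edgeSet ∆ H.edgeSet).ncard ≤
      (G.edgeSet \ G'.edgeSet).ncard + (H.edgeSet \ H'.edgeSet).ncard + 2 * d * sᶜ.ncard := by
  have hsub : G.edgeSet ∆ H.edgeSet ⊆ (G.edgeSet \ G'.edgeSet) ∪ (H.edgeSet \ H'.edgeSet) ∪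
      ((⋃ v ∈ sᶜ, G'.incidenceSet v) ∪ ⋃ v ∈ sᶜ, H'.incidenceSet v) := by
    intro e he
    have hG'e : e ∈ G'.edgeSet → e ∈ G.edgeSet := (edgeSet_mono hG' ·)
    have hH'e : e ∈ H'.edgeSet → e ∈ H.edgeSet := (edgeSet_mono hH' ·)
    by_cases he' : e ∈ G'.edgeSet ∆ H'.edgeSet
    · exact Or.inr (edgeSet_symmDiff_subset_of_adj_iff hs he')
    · simp only [Set.mem_symmDiff, mem_union, mem_sdiff] at he he' ⊢
      tauto
  calc (G.edgeSet ∆ H.edgeSet).ncard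
      ≤ (G.edgeSet \ G'.edgeSet).ncard + (H.edgeSet \ H'.edgeSet).ncard +
          ((⋃ v ∈ sᶜ, G'.incidenceSet v).ncard + (⋃ v ∈ sᶜ, H'.incidenceSet v).ncard) :=
        (ncard_le_ncard hsub).trans <| (ncard_union_le _ _).trans <|
          add_le_add (ncard_union_le _ _) (ncard_union_le _ _)
    _ ≤ _ := by
        have := ncard_biUnion_incidenceSet_le G' hdG' sᶜ
        have := ncard_biUnion_incidenceSet_le H' hdH' sᶜ
        linarith

lemma ncard_edgeSet_symmDiff_comap_le [Finite V] [Finite W] {G G' : SimpleGraph V}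
    {H H' : SimpleGraph W} (ρ : V ≃ W) {d : ℕ} (hG' : G' ≤ G) (hH' : H' ≤ H)
    (hdG : ∀ v, (G.neighborSet v).ncard ≤ d) (hdH : ∀ w, (H.neighborSet w).ncard ≤ d) {s : Set V}
    (hs : ∀ u ∈ s, ∀ v ∈ s, G'.Adj u v ↔ H'.Adj (ρ u) (ρ v)) :
    (G.edgeSet ∆ (H.comap ρ).edgeSet).ncard ≤
      (G.edgeSet \ G'.edgeSet).ncard + (H.edgeSet \ H'.edgeSet).ncard + 2 * d * sᶜ.ncard := by
  rw [← ncard_edgeSet_comap_sdiff ρ H H']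
  exact ncard_edgeSet_symmDiff_le hG' (fun _ _ h => hH' h)
    (fun v => (ncard_neighborSet_le_of_le hG' v).trans (hdG v))
    (fun v => (ncard_neighborSet_comap_equiv ρ H' v).trans_le
      ((ncard_neighborSet_le_of_le hH' _).trans (hdH _))) hs

lemma supp_connectedComponentMk (G : SimpleGraph V) (v : V) :
    (G.connectedComponentMk v).supp = {w | G.Reachable v w} := by
  ext w
  simp [ConnectedComponent.eq, reachable_comm]

def disjointUnion (R : ι → SimpleGraph ℕ) : SimpleGraph (ι × ℕ) where
  Adj x y := x.1 = y.1 ∧ (R x.1).Adj x.2 y.2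
  symm := ⟨by
    rintro ⟨i, a⟩ ⟨j, b⟩ ⟨rfl, h⟩
    exact ⟨rfl, h.symm⟩⟩
  loopless := ⟨fun _ h => h.2.ne rfl⟩

@[simp] lemma disjointUnion_adj {R : ι → SimpleGraph ℕ} {x y : ι × ℕ} :
    (disjointUnion R).Adj x y ↔ x.1 = y.1 ∧ (R x.1).Adj x.2 y.2 := Iff.rfl

variable {G : SimpleGraph V} {R : ι → SimpleGraph ℕ} (ℓ : G.ConnectedComponent → ι)
  (ψ : ∀ c, G.induce c.supp ↪g R (ℓ c))

def componentwiseMap (v : V) : ι × ℕ :=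
  (ℓ (G.connectedComponentMk v), ψ _ ⟨v, rfl⟩)

lemma componentwiseMap_of_mem {c : G.ConnectedComponent} {v : V} (hv : v ∈ c.supp) :
    componentwiseMap ℓ ψ v = (ℓ c, ψ c ⟨v, hv⟩) := by
  rw [ConnectedComponent.mem_supp_iff] at hv
  subst hv
  rfl

def Embedding.ofConnectedComponents (hℓ : ℓ.Injective) : G ↪g disjointUnion R where
  toFun := componentwiseMap ℓ ψ
  inj' u v h := by
    have hu : u ∈ (G.connectedComponentMk v).supp := hℓ (congrArg Prod.fst h)
    rw [componentwiseMap_of_mem ℓ ψ hu, componentwiseMap_of_mem ℓ ψ (c := _) rfl] at h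
    exact congrArg Subtype.val ((ψ _).injective (Prod.ext_iff.1 h).2)
  map_rel_iff' {u v} := by
    change (disjointUnion R).Adj (componentwiseMap ℓ ψ u) (componentwiseMap ℓ ψ v) ↔ G.Adj u v
    by_cases huv : G.connectedComponentMk u = G.connectedComponentMk v
    · have hu : u ∈ (G.connectedComponentMk v).supp := huv
      rw [componentwiseMap_of_mem ℓ ψ hu, componentwiseMap_of_mem ℓ ψ (c := _) rfl]
      simp only [disjointUnion_adj, true_and, (ψ _).map_adj_iff, comap_adj,
        Function.Embedding.subtype_apply]
    · exact iff_of_false (fun h => huv (hℓ h.1))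
        (fun h => huv (ConnectedComponent.connectedComponentMk_eq_of_adj h))

lemma range_ofConnectedComponents (hℓ : ℓ.Injective) :
    range (Embedding.ofConnectedComponents ℓ ψ hℓ) = {x | ∃ c, ℓ c = x.1 ∧ x.2 ∈ range (ψ c)} := by
  ext ⟨i, a⟩
  constructor
  · rintro ⟨v, hv⟩
    exact ⟨G.connectedComponentMk v, congrArg Prod.fst hv, _, congrArg Prod.snd hv⟩
  · rintro ⟨c, rfl, ⟨v, hv⟩, rfl⟩
    exact ⟨v, componentwiseMap_of_mem ℓ ψ hv⟩

end SimpleGraph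

namespace ConnRep

variable {K : ℕ} {V : Type*}

abbrev IsoClass (K : ℕ) := Quot fun p q : ConnRep K => Nonempty (p.graph ≃g q.graph)

lemma mk_eq_mk_iff {p q : ConnRep K} :
    (Quot.mk _ p : IsoClass K) = Quot.mk _ q ↔ Nonempty (p.graph ≃g q.graph) := by
  rw [Quot.eq, Equivalence.eqvGen_iff
    ⟨fun _ => ⟨Iso.refl⟩, fun ⟨e⟩ => ⟨e.symm⟩, fun ⟨e⟩ ⟨f⟩ => ⟨e.trans f⟩⟩]

instance : Finite (ConnRep K) := by
  refine Finite.of_injective (β := Σ n : Fin (K + 1), SimpleGraph (Fin n))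
    (fun p => ⟨⟨p.n, Nat.lt_succ_of_le p.hn⟩, p.graph⟩) ?_
  rintro ⟨n, _, G, _⟩ ⟨m, _, H, _⟩ h
  obtain ⟨hnm, hGH⟩ := Sigma.mk.inj_iff.1 h
  obtain rfl : n = m := congrArg Fin.val hnm
  obtain rfl := eq_of_heq hGH
  rfl

/-- Vertex `((S, i), j)` is vertex `j` of the `i`-th copy of the representative of `S`. -/
noncomputable abbrev copiesGraph (K : ℕ) : SimpleGraph ((IsoClass K × ℕ) × ℕ) :=
  disjointUnion fun x => x.1.out.graph.map Fin.valEmbedding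

def firstCopies (a : IsoClass K → ℕ) : Set ((IsoClass K × ℕ) × ℕ) :=
  {x | x.1.2 < a x.1.1 ∧ x.2 < x.1.1.out.n}

lemma firstCopies_inter_preimage_subset_or (a b : IsoClass K → ℕ) (S : IsoClass K) :
    firstCopies a ∩ (fun x => x.1.1) ⁻¹' {S} ⊆ firstCopies b ∩ (fun x => x.1.1) ⁻¹' {S} ∨
      firstCopies b ∩ (fun x => x.1.1) ⁻¹' {S} ⊆ firstCopies a ∩ (fun x => x.1.1) ⁻¹' {S} := by
  rcases le_total (a S) (b S) with h | h <;> [left; right] <;>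
    rintro ⟨⟨_, i⟩, j⟩ ⟨⟨hi, hj⟩, rfl⟩ <;> exact ⟨⟨hi.trans_le h, hj⟩, rfl⟩

lemma compClass_iff_of_iso {G : SimpleGraph V} {v : V} {S : IsoClass K}
    (e : G.induce (G.connectedComponentMk v).supp ≃g S.out.graph) (p : ConnRep K) :
    compClass G v p ↔ Quot.mk _ p = S := by
  rw [compClass, ← supp_connectedComponentMk, ← Quot.out_eq S, mk_eq_mk_iff]
  exact ⟨fun ⟨f⟩ => ⟨f.symm.trans e⟩, fun ⟨f⟩ => ⟨e.trans f.symm⟩⟩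

lemma exists_iso_out [Finite V] {G : SimpleGraph V} (c : G.ConnectedComponent)
    (hc : c.supp.ncard ≤ K) : ∃ S : IsoClass K, Nonempty (G.induce c.supp ≃g S.out.graph) := by
  let e := Iso.map (Finite.equivFin c.supp) (G.induce c.supp)
  let p : ConnRep K :=
    ⟨_, by rwa [Nat.card_coe_set_eq], _, e.connected_iff.1 c.connected_toSimpleGraph⟩
  obtain ⟨f⟩ := mk_eq_mk_iff.1 (Quot.out_eq (Quot.mk _ p))
  exact ⟨Quot.mk _ p, ⟨e.trans f.symm⟩⟩

theorem exists_embedding_copiesGraph [Finite V] (G : SimpleGraph V)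
    (hK : ∀ v, {w | G.Reachable v w}.ncard ≤ K) :
    ∃ (f : G ↪g copiesGraph K) (a : IsoClass K → ℕ),
      (∀ v p, compClass G v p ↔ Quot.mk _ p = (f v).1.1) ∧
      range f = firstCopies a := by
  choose cls hcls using fun c : G.ConnectedComponent =>
    exists_iso_out c (c.ind fun v => by rw [supp_connectedComponentMk]; exact hK v)
  obtain ⟨idx, hinj, hrange⟩ := exists_injective_prod_index cls
  have hidx : ∀ x, x ∈ range (fun c => (cls c, idx c)) ↔ x.2 < Nat.card {c // cls c = x.1} :=
    fun x => by rw [hrange]; rfl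
  let ψ c : G.induce c.supp ↪g (cls c).out.graph.map Fin.valEmbedding :=
    (Embedding.map Fin.valEmbedding _).comp (hcls c).some.toEmbedding
  have hψ : ∀ c j, j ∈ range (ψ c) ↔ j < (cls c).out.n := fun c j =>
    ⟨fun ⟨y, hy⟩ => hy ▸ ((hcls c).some y).is_lt,
      fun hj => ⟨(hcls c).some.symm ⟨j, hj⟩, by simp [ψ]⟩⟩
  refine ⟨Embedding.ofConnectedComponents (fun c => (cls c, idx c)) ψ hinj,
    fun S => Nat.card {c // cls c = S}, fun v => compClass_iff_of_iso (hcls _).some, ?_⟩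
  rw [range_ofConnectedComponents]
  ext ⟨x, j⟩
  simp only [firstCopies, mem_ofPred_eq, hψ]
  constructor
  · rintro ⟨c, rfl, hj⟩
    exact ⟨(hidx _).1 (mem_range_self c), hj⟩
  · rintro ⟨hx, hj⟩
    obtain ⟨c, rfl⟩ := (hidx x).2 hx
    exact ⟨c, rfl, hj⟩

lemma ncard_setOf_compClass {G : SimpleGraph V} {f : G ↪g copiesGraph K}
    (hf : ∀ v p, compClass G v p ↔ Quot.mk _ p = (f v).1.1) (S : IsoClass K) :
    {v | ∃ p : ConnRep K, Quot.mk _ p = S ∧ compClass G v p}.ncard =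
      (range f ∩ (fun x => x.1.1) ⁻¹' {S}).ncard := by
  have : {v | ∃ p : ConnRep K, Quot.mk _ p = S ∧ compClass G v p} =
      f ⁻¹' ((fun x => x.1.1) ⁻¹' {S}) := by
    ext v
    simp only [hf, mem_ofPred_eq, mem_preimage, mem_singleton_iff]
    exact ⟨fun ⟨p, hp, h⟩ => h ▸ hp, fun h => ⟨S.out, Quot.out_eq S, (Quot.out_eq S).trans h.symm⟩⟩
  rw [this, ← ncard_image_of_injective _ f.injective, image_preimage_eq_inter_range, inter_comm]

end ConnRep

theorem stmt_14_general {V W : Type*} [Fintype V] [Fintype W] (G : SimpleGraph V)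
    (H : SimpleGraph W) (G' : SimpleGraph V) (H' : SimpleGraph W)
    (d K n : ℕ) (ε κ δ : ℝ)
    (hδ : 2 * ε * d + κ * d < δ)
    (hn : Fintype.card V = n) (hn' : Fintype.card W = n)
    (hdG : ∀ v, (G.neighborSet v).ncard ≤ d) (hdH : ∀ w, (H.neighborSet w).ncard ≤ d)
    (hG' : G' ≤ G) (hH' : H' ≤ H)
    (hKG : ∀ v, {w | G'.Reachable v w}.ncard ≤ K)
    (hKH : ∀ v, {w | H'.Reachable v w}.ncard ≤ K)
    (hGdel : ((G.edgeSet \ G'.edgeSet).ncard : ℝ) ≤ ε * d * n)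
    (hHdel : ((H.edgeSet \ H'.edgeSet).ncard : ℝ) ≤ ε * d * n)
    (hsum : ∑ᶠ S : Quot (fun p q : ConnRep K => Nonempty (p.graph ≃g q.graph)),
      |({v : V | ∃ p : ConnRep K, Quot.mk _ p = S ∧ compClass G' v p}.ncard : ℝ) / n -
        ({w : W | ∃ p : ConnRep K, Quot.mk _ p = S ∧ compClass H' w p}.ncard : ℝ) / n|
      < κ) :
    ∃ ρ : V ≃ W,
      ((symmDiff {e : Sym2 V | e.map ρ ∈ H.edgeSet} G.edgeSet).ncard : ℝ) ≤ δ * n := by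
  obtain ⟨f, a, hfG', hfrange⟩ := ConnRep.exists_embedding_copiesGraph G' hKG
  obtain ⟨g, b, hgH', hgrange⟩ := ConnRep.exists_embedding_copiesGraph H' hKH
  obtain ⟨ρ, hρ⟩ := exists_equiv_apply_eq_of_mem_preimage_range (hn.trans hn'.symm) f.injective g
  set M := f ⁻¹' range g
  have hagree : ∀ u ∈ M, ∀ v ∈ M, G'.Adj u v ↔ H'.Adj (ρ u) (ρ v) := fun u hu v hv => by
    rw [← g.map_adj_iff, hρ u hu, hρ v hv, f.map_adj_iff]
  have hunmatched : ((2 * Mᶜ.ncard : ℕ) : ℝ) ≤ κ * n := by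
    have : Fintype (ConnRep.IsoClass K) := Fintype.ofFinite _
    rw [finsum_eq_sum_of_fintype] at hsum
    rw [two_mul_ncard_compl_preimage_range (by simp [hn, hn']) f.injective g.injective,
      ncard_symmDiff_eq_sum_abs _ (finite_range f) (finite_range g)
        (by rw [hfrange, hgrange]; exact ConnRep.firstCopies_inter_preimage_subset_or a b)]
    simp only [← ConnRep.ncard_setOf_compClass hfG', ← ConnRep.ncard_setOf_compClass hgH']
    exact sum_abs_sub_ncard_le hn hn' _ _ hsum
  have hbound := ncard_edgeSet_symmDiff_comap_le ρ hG' hH' hdG hdH hagree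
  refine ⟨ρ, ?_⟩
  calc ((symmDiff {e : Sym2 V | e.map ρ ∈ H.edgeSet} G.edgeSet).ncard : ℝ)
      = ((G.edgeSet ∆ (H.comap ρ).edgeSet).ncard : ℝ) := by
        rw [edgeSet_comap, symmDiff_comm]
        rfl
    _ ≤ (G.edgeSet \ G'.edgeSet).ncard + (H.edgeSet \ H'.edgeSet).ncard +
          d * ((2 * Mᶜ.ncard : ℕ) : ℝ) := by
        push_cast
        exact_mod_cast hbound.trans_eq (by ring)
    _ ≤ ε * d * n + ε * d * n + d * (κ * n) := by gcongr
    _ = (2 * ε * d + κ * d) * n := by ring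
    _ ≤ δ * n := by gcongr

/-- Let `2εd + κd < δ`, and let `G`, `H` be finite graphs with degree bound
`d` on `n` vertices admitting spanning subgraphs `G' ≤ G`, `H' ≤ H`, all of whose
components have at most `K` vertices, with `|E(G)∖E(G')| ≤ εdn`, `|E(H)∖E(H')| ≤ εdn`
and `Σ_S |c^{G'}_S − c^{H'}_S| < κ`. Then there is a bijection `ρ : V(G) → V(H)` with
`|ρ^{-1}(E(H)) △ E(G)| ≤ δn`. -/
theorem stmt_14 {V W : Type*} [Fintype V] [Fintype W] (G : SimpleGraph V)
    (H : SimpleGraph W) (G' : SimpleGraph V) (H' : SimpleGraph W)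
    (d K n : ℕ) (ε κ δ : ℝ) (hε : 0 < ε) (hκ : 0 < κ)
    (hδ : 2 * ε * d + κ * d < δ)
    (hn : Fintype.card V = n) (hn' : Fintype.card W = n)
    (hdG : ∀ v, (G.neighborSet v).ncard ≤ d) (hdH : ∀ w, (H.neighborSet w).ncard ≤ d)
    (hG' : G' ≤ G) (hH' : H' ≤ H)
    (hKG : ∀ v, {w | G'.Reachable v w}.ncard ≤ K)
    (hKH : ∀ v, {w | H'.Reachable v w}.ncard ≤ K)
    (hGdel : ((G.edgeSet \ G'.edgeSet).ncard : ℝ) ≤ ε * d * n)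
    (hHdel : ((H.edgeSet \ H'.edgeSet).ncard : ℝ) ≤ ε * d * n)
    (hsum : ∑ᶠ S : Quot (fun p q : ConnRep K => Nonempty (p.graph ≃g q.graph)),
      |({v : V | ∃ p : ConnRep K, Quot.mk _ p = S ∧ compClass G' v p}.ncard : ℝ) / n -
        ({w : W | ∃ p : ConnRep K, Quot.mk _ p = S ∧ compClass H' w p}.ncard : ℝ) / n|
      < κ) :
    ∃ ρ : V ≃ W,
      ((symmDiff {e : Sym2 V | e.map ρ ∈ H.edgeSet} G.edgeSet).ncard : ℝ) ≤ δ * n :=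
  stmt_14_general G H G' H' d K n ε κ δ hδ hn hn' hdG hdH hG' hH' hKG hKH hGdel hHdel hsum
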